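/- Let C_n be the cycle on n≥3 vertices and H any connected graph. Then F(C_n +_S H) = n·F(H) + 6n·M₁(H) + 24n·|E(H)| + 16n·|V(H)|. -/

import Mathlib

/-! In `C_n +_S H` a vertex `(u, v)` with `u` a vertex of `C_n` sees its `H`-neighbours in its own
copy of `H` and the two subdivision vertices of the edges at `u`, so it has degree `2 + d_H(v)`;
a vertex `(e, v)` with `e` an edge of `C_n` has degree `2`. Expanding `(2 + d_H(v))³` and using
`Σ d_H(v) = 2|E(H)|`, the first kind contributes `n (F + 6 M₁ + 24 |E(H)| + 8 |V(H)|)`, and the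
`n |V(H)|` vertices of the second kind contribute `8` each. -/

open SimpleGraph Finset
open scoped Classical

noncomputable section

/-- The generalized hierarchical product `G(U)ΠH`. -/
def hierProd {α β : Type*} (G : SimpleGraph α) (H : SimpleGraph β) (U : Set α) :
    SimpleGraph (α × β) where
  Adj p q := (p.1 = q.1 ∧ p.1 ∈ U ∧ H.Adj p.2 q.2) ∨ (p.2 = q.2 ∧ G.Adj p.1 q.1)
  symm := ⟨by
    rintro p q (⟨h1, h2, h3⟩ | ⟨h1, h2⟩)
    · exact Or.inl ⟨h1.symm, h1 ▸ h2, h3.symm⟩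
    · exact Or.inr ⟨h1.symm, h2.symm⟩⟩
  loopless := ⟨by
    rintro p (⟨_, _, h⟩ | ⟨_, h⟩)
    · exact H.irrefl h
    · exact G.irrefl h⟩

/-- The F-index (forgotten topological index): sum of cubes of degrees. -/
def Findex {α : Type*} [Fintype α] (G : SimpleGraph α) : ℕ :=
  ∑ v, G.degree v ^ 3

/-- The first Zagreb index: sum of squares of degrees. -/
def M1 {α : Type*} [Fintype α] (G : SimpleGraph α) : ℕ :=
  ∑ v, G.degree v ^ 2

/-- The general first Zagreb index with exponent `n`. -/
def xiIndex {α : Type*} [Fintype α] (G : SimpleGraph α) (n : ℕ) : ℕ :=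
  ∑ v, G.degree v ^ n

/-- The redefined Zagreb index `ReZG(G) = Σ_{uv∈E} d(u)d(v)(d(u)+d(v))`. -/
def ReZG {α : Type*} [Fintype α] (G : SimpleGraph α) : ℕ :=
  ∑ e ∈ G.edgeFinset,
    Sym2.lift ⟨fun u v => G.degree u * G.degree v * (G.degree u + G.degree v),
      fun u v => by ring⟩ e

/-- The subdivision graph `S(G)`: each edge replaced by a path of length two. -/
def Sgraph {α : Type*} (G : SimpleGraph α) : SimpleGraph (α ⊕ ↥G.edgeSet) where
  Adj x y :=
    match x, y with
    | Sum.inl u, Sum.inr e => u ∈ (e : Sym2 α)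
    | Sum.inr e, Sum.inl u => u ∈ (e : Sym2 α)
    | _, _ => False
  symm := ⟨by rintro (u | e) (v | f) h <;> simp_all⟩
  loopless := ⟨by rintro (u | e) h <;> simp_all⟩

/-- The graph on `V(G) ⊕ E(G)` whose only edges are the original edges of `G`. -/
def Ograph {α : Type*} (G : SimpleGraph α) : SimpleGraph (α ⊕ ↥G.edgeSet) where
  Adj x y :=
    match x, y with
    | Sum.inl u, Sum.inl v => G.Adj u v
    | _, _ => False
  symm := ⟨by rintro (u | e) (v | f) h <;> simp_all <;> exact h.symm⟩
  loopless := ⟨by rintro (u | e) h <;> simp_all⟩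

/-- The graph on `V(G) ⊕ E(G)` whose edges join pairs of adjacent edges of `G`
(line-graph adjacency). -/
def Lgraph {α : Type*} (G : SimpleGraph α) : SimpleGraph (α ⊕ ↥G.edgeSet) where
  Adj x y :=
    match x, y with
    | Sum.inr e, Sum.inr f => e ≠ f ∧ ∃ u, u ∈ (e : Sym2 α) ∧ u ∈ (f : Sym2 α)
    | _, _ => False
  symm := ⟨by
    rintro (u | e) (v | f) h <;> simp_all
    exact ⟨Ne.symm h.1, h.2.imp fun u hu => hu.symm⟩⟩
  loopless := ⟨by rintro (u | e) h <;> simp_all⟩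

/-- The triangle parallel graph `R(G)`. -/
def Rgraph {α : Type*} (G : SimpleGraph α) : SimpleGraph (α ⊕ ↥G.edgeSet) :=
  Sgraph G ⊔ Ograph G

/-- The line superposition graph `Q(G)`. -/
def Qgraph {α : Type*} (G : SimpleGraph α) : SimpleGraph (α ⊕ ↥G.edgeSet) :=
  Sgraph G ⊔ Lgraph G

/-- The total graph `T(G)`. -/
def Tgraph {α : Type*} (G : SimpleGraph α) : SimpleGraph (α ⊕ ↥G.edgeSet) :=
  Sgraph G ⊔ Ograph G ⊔ Lgraph G

/-- The F-sum `G +_F H`, where `K` is one of `S(G), R(G), Q(G), T(G)`: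
the generalized hierarchical product `K(V(G))ΠH`. -/
def FSum {α β : Type*} {G : SimpleGraph α} (K : SimpleGraph (α ⊕ ↥G.edgeSet))
    (H : SimpleGraph β) : SimpleGraph ((α ⊕ ↥G.edgeSet) × β) :=
  hierProd K H (Set.range Sum.inl)

end

namespace SimpleGraph

variable {α β : Type*}

@[simp]
lemma hierProd_adj (G : SimpleGraph α) (H : SimpleGraph β) (U : Set α) (p q : α × β) :
    (hierProd G H U).Adj p q ↔ p.1 = q.1 ∧ p.1 ∈ U ∧ H.Adj p.2 q.2 ∨ p.2 = q.2 ∧ G.Adj p.1 q.1 :=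
  Iff.rfl

@[simp]
lemma Sgraph_adj_inr_inl (G : SimpleGraph α) (e : G.edgeSet) (u : α) :
    (Sgraph G).Adj (Sum.inr e) (Sum.inl u) ↔ u ∈ (e : Sym2 α) :=
  Iff.rfl

@[simp]
lemma not_Sgraph_adj_inl_inl (G : SimpleGraph α) (u v : α) :
    ¬(Sgraph G).Adj (Sum.inl u) (Sum.inl v) :=
  id

@[simp]
lemma not_Sgraph_adj_inr_inr (G : SimpleGraph α) (e f : G.edgeSet) :
    ¬(Sgraph G).Adj (Sum.inr e) (Sum.inr f) :=
  id

variable [Fintype α] [Fintype β]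

lemma sum_add_degree_pow_three (H : SimpleGraph β) (k : ℕ) :
    ∑ v, (k + H.degree v) ^ 3 =
      Findex H + 3 * k * M1 H + 6 * k ^ 2 * #H.edgeFinset + k ^ 3 * Fintype.card β := by
  have hexpand : ∀ v, (k + H.degree v) ^ 3 =
      H.degree v ^ 3 + 3 * k * H.degree v ^ 2 + 3 * k ^ 2 * H.degree v + k ^ 3 := fun v => by ring
  simp only [hexpand, sum_add_distrib, ← mul_sum, sum_degrees_eq_twice_card_edges, sum_const,
    card_univ, smul_eq_mul, Findex, M1]
  ring

section HierarchicalProduct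

variable (G : SimpleGraph α) (H : SimpleGraph β) {U : Set α} {u : α}

lemma hierProd_neighborFinset_of_mem (hu : u ∈ U) (v : β) :
    (hierProd G H U).neighborFinset (u, v) =
      G.neighborFinset u ×ˢ {v} ∪ {u} ×ˢ H.neighborFinset v := by
  ext ⟨x, w⟩
  simp only [mem_neighborFinset, hierProd_adj, mem_union, mem_product, mem_singleton]
  grind

lemma hierProd_neighborFinset_of_not_mem (hu : u ∉ U) (v : β) :
    (hierProd G H U).neighborFinset (u, v) = G.neighborFinset u ×ˢ {v} := by
  ext ⟨x, w⟩
  simp only [mem_neighborFinset, hierProd_adj, mem_product, mem_singleton]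
  grind

lemma hierProd_degree_of_mem (hu : u ∈ U) (v : β) :
    (hierProd G H U).degree (u, v) = G.degree u + H.degree v := by
  have hdisj : Disjoint (G.neighborFinset u ×ˢ {v}) ({u} ×ˢ H.neighborFinset v) :=
    disjoint_product.2 (.inl (by simp))
  rw [← card_neighborFinset_eq_degree, hierProd_neighborFinset_of_mem G H hu,
    card_union_of_disjoint hdisj, card_product, card_product]
  simp

lemma hierProd_degree_of_not_mem (hu : u ∉ U) (v : β) :
    (hierProd G H U).degree (u, v) = G.degree u := by
  rw [← card_neighborFinset_eq_degree, hierProd_neighborFinset_of_not_mem G H hu, card_product]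
  simp

end HierarchicalProduct

section FSum

variable {G : SimpleGraph α} [Fintype G.edgeSet]

lemma FSum_degree_inl (K : SimpleGraph (α ⊕ G.edgeSet)) (H : SimpleGraph β) (u : α) (v : β) :
    (FSum K H).degree (Sum.inl u, v) = K.degree (Sum.inl u) + H.degree v :=
  hierProd_degree_of_mem K H (Set.mem_range_self u) v

lemma FSum_degree_inr (K : SimpleGraph (α ⊕ G.edgeSet)) (H : SimpleGraph β) (e : G.edgeSet)
    (v : β) : (FSum K H).degree (Sum.inr e, v) = K.degree (Sum.inr e) :=
  hierProd_degree_of_not_mem K H (by simp) v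

end FSum

section Subdivision

variable (G : SimpleGraph α) [Fintype G.edgeSet]

lemma Sgraph_degree_inr (e : G.edgeSet) : (Sgraph G).degree (Sum.inr e) = 2 := by
  obtain ⟨⟨a, b⟩, he⟩ := e
  have hnb : (Sgraph G).neighborFinset (Sum.inr ⟨s(a, b), he⟩) = {Sum.inl a, Sum.inl b} := by
    ext (x | f) <;> simp [eq_comm]
  rw [← card_neighborFinset_eq_degree, hnb, card_pair (by simpa using G.ne_of_adj he)]

variable [G.LocallyFinite]

lemma Sgraph_degree_inl (u : α) : (Sgraph G).degree (Sum.inl u) = G.degree u := by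
  rw [← card_neighborSet_eq_degree, ← card_incidenceSet_eq_degree]
  refine Fintype.card_congr
    { toFun := fun
        | ⟨Sum.inl v, h⟩ => (not_Sgraph_adj_inl_inl G u v h).elim
        | ⟨Sum.inr e, h⟩ => ⟨e, e.2, h⟩
      invFun := fun e => ⟨Sum.inr ⟨e, e.2.1⟩, e.2.2⟩
      left_inv := ?_
      right_inv := fun _ => rfl }
  rintro ⟨v | e, h⟩
  · exact (not_Sgraph_adj_inl_inl G u v h).elim
  · rfl

theorem Findex_FSum_Sgraph (H : SimpleGraph β) :
    Findex (FSum (Sgraph G) H) =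
      ∑ u, ∑ v, (G.degree u + H.degree v) ^ 3 + 8 * Fintype.card G.edgeSet * Fintype.card β := by
  rw [Findex, Fintype.sum_prod_type, Fintype.sum_sum_type]
  simp only [FSum_degree_inl, FSum_degree_inr, Sgraph_degree_inl, Sgraph_degree_inr, sum_const,
    card_univ, smul_eq_mul]
  ring

theorem Findex_FSum_Sgraph_of_isRegularOfDegree {k : ℕ} (hG : G.IsRegularOfDegree k)
    (H : SimpleGraph β) :
    Findex (FSum (Sgraph G) H) =
      Fintype.card α * (Findex H + 3 * k * M1 H + 6 * k ^ 2 * #H.edgeFinset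
        + k ^ 3 * Fintype.card β) + 8 * Fintype.card G.edgeSet * Fintype.card β := by
  simp only [Findex_FSum_Sgraph, hG.degree_eq, sum_add_degree_pow_three, sum_const, card_univ,
    smul_eq_mul]

end Subdivision

lemma cycleGraph_isRegularOfDegree_two {n : ℕ} [(cycleGraph n).LocallyFinite] (hn : 3 ≤ n) :
    (cycleGraph n).IsRegularOfDegree 2 := by
  obtain ⟨m, rfl⟩ := Nat.exists_eq_add_of_le' hn
  intro v
  convert cycleGraph_degree_three_le

lemma IsRegularOfDegree.two_mul_card_edgeFinset {G : SimpleGraph α} [DecidableRel G.Adj] {k : ℕ}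
    (hG : G.IsRegularOfDegree k) : 2 * #G.edgeFinset = k * Fintype.card α := by
  rw [← sum_degrees_eq_twice_card_edges]
  simp [hG.degree_eq, mul_comm]

end SimpleGraph

theorem Findex_Ssum_cycle_general {β : Type*} [Fintype β] (n : ℕ) (hn : 3 ≤ n)
    (H : SimpleGraph β) :
    Findex (FSum (Sgraph (cycleGraph n)) H) =
      n * Findex H + 6 * n * M1 H + 24 * n * H.edgeFinset.card
        + 16 * n * Fintype.card β := by
  have hreg := cycleGraph_isRegularOfDegree_two hn
  have hedges : Fintype.card (cycleGraph n).edgeSet = n := by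
    have := hreg.two_mul_card_edgeFinset
    rw [Fintype.card_fin] at this
    rw [card_edgeSet]
    omega
  rw [Findex_FSum_Sgraph_of_isRegularOfDegree _ hreg, Fintype.card_fin, hedges]
  ring

theorem Findex_Ssum_cycle {β : Type*} [Fintype β] (n : ℕ) (hn : 3 ≤ n)
    (H : SimpleGraph β) (hH : H.Connected) :
    Findex (FSum (Sgraph (cycleGraph n)) H) =
      n * Findex H + 6 * n * M1 H + 24 * n * H.edgeFinset.card
        + 16 * n * Fintype.card β :=
  Findex_Ssum_cycle_general n hn H
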